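/- The set of upper-triangular matrices commuting with M_γ = E_{(l+1),1} − E_{2l,l} in gl_{2l} is a linear subspace of dimension (2l−1)(l−2) + 3. -/

import Mathlib

open Matrix Finset

lemma finrank_submodule_eq_card {n : ℕ} (W : Submodule ℂ (Matrix (Fin n) (Fin n) ℂ))
    (S : Finset (Fin n × Fin n))
    (hinj : ∀ x ∈ W, (∀ p ∈ S, x p.1 p.2 = 0) → x = 0)
    (hsurj : ∀ f : S → ℂ, ∃ x, ∃ hx : x ∈ W, ∀ p : S, x p.1.1 p.1.2 = f p) :
    Module.finrank ℂ W = S.card := by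
  let φ : W →ₗ[ℂ] (S → ℂ) :=
    { toFun := fun x p => (x : Matrix (Fin n) (Fin n) ℂ) p.1.1 p.1.2
      map_add' := fun x y => rfl
      map_smul' := fun c x => rfl }
  have hb : Function.Bijective φ := by
    constructor
    · rw [injective_iff_map_eq_zero]
      intro x hx
      have : (x : Matrix (Fin n) (Fin n) ℂ) = 0 :=
        hinj x x.2 (fun p hp => congrFun hx ⟨p, hp⟩)
      exact Subtype.ext this
    · intro f
      obtain ⟨x, hxW, hx⟩ := hsurj f
      exact ⟨⟨x, hxW⟩, funext hx⟩
  rw [LinearEquiv.finrank_eq (LinearEquiv.ofBijective φ hb),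
    Module.finrank_fintype_fun_eq_card, Fintype.card_coe]

lemma count_nat (m : ℕ) :
    ∑ i ∈ Finset.range (2*m+4),
      (if i = 0 ∨ i = m+1 then 0 else ((2*m+3-i) - if i ≤ m+2 then 1 else 0))
      = (2*m+3)*m := by
  have hsplit : ∑ i ∈ Finset.range (2*m+4),
      (if i = 0 ∨ i = m+1 then 0 else ((2*m+3-i) - if i ≤ m+2 then 1 else 0))
      = (∑ i ∈ Finset.range (m+3),
          (if i = 0 ∨ i = m+1 then 0 else ((2*m+3-i) - if i ≤ m+2 then 1 else 0)))
        + ∑ i ∈ Finset.Ico (m+3) (2*m+4),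
          (if i = 0 ∨ i = m+1 then 0 else ((2*m+3-i) - if i ≤ m+2 then 1 else 0)) := by
    rw [Finset.range_eq_Ico, ← Finset.sum_Ico_consecutive _ (by omega : 0 ≤ m+3) (by omega : m+3 ≤ 2*m+4),
      ← Finset.range_eq_Ico]
  rw [hsplit]
  -- piece 2
  have hp2 : ∑ i ∈ Finset.Ico (m+3) (2*m+4),
      (if i = 0 ∨ i = m+1 then 0 else ((2*m+3-i) - if i ≤ m+2 then 1 else 0))
      = ∑ k ∈ Finset.range (m+1), k := by
    rw [Finset.sum_Ico_eq_sum_range]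
    have h1 : (2*m+4) - (m+3) = m+1 := by omega
    rw [h1]
    rw [← Finset.sum_range_reflect (fun k => k) (m+1)]
    apply Finset.sum_congr rfl
    intro k hk
    rw [Finset.mem_range] at hk
    have : ¬((m+3+k) = 0 ∨ (m+3+k) = m+1) := by omega
    rw [if_neg this, if_neg (by omega : ¬(m+3+k ≤ m+2))]
    omega
  rw [hp2]
  -- piece 1
  have hp1 : ∀ i ∈ Finset.range (m+3),
      (if i = 0 ∨ i = m+1 then 0 else ((2*m+3-i) - if i ≤ m+2 then 1 else 0))
      = (if i = 0 ∨ i = m+1 then 0 else (2*m+2-i)) := by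
    intro i hi
    rw [Finset.mem_range] at hi
    by_cases h : i = 0 ∨ i = m+1
    · rw [if_pos h, if_pos h]
    · rw [if_neg h, if_neg h, if_pos (by omega : i ≤ m+2)]
      omega
  rw [Finset.sum_congr rfl hp1]
  -- relate to full sum
  have hfull : ∑ i ∈ Finset.range (m+3), (2*m+2-i)
      = (∑ i ∈ Finset.range (m+3), (if i = 0 ∨ i = m+1 then (2*m+2-i) else 0))
        + ∑ i ∈ Finset.range (m+3), (if i = 0 ∨ i = m+1 then 0 else (2*m+2-i)) := by
    rw [← Finset.sum_add_distrib]
    apply Finset.sum_congr rfl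
    intro i _
    by_cases h : i = 0 ∨ i = m+1 <;> simp [h]
  have hpts : ∑ i ∈ Finset.range (m+3), (if i = 0 ∨ i = m+1 then (2*m+2-i) else 0)
      = (2*m+2) + (m+1) := by
    have : ∀ i, (i = 0 ∨ i = m+1) ↔ i ∈ ({0, m+1} : Finset ℕ) := by
      intro i; simp
    simp_rw [this]
    rw [Finset.sum_ite_mem]
    have hinter : Finset.range (m+3) ∩ ({0, m+1} : Finset ℕ) = {0, m+1} := by
      apply Finset.inter_eq_right.mpr
      intro i hi
      simp only [Finset.mem_insert, Finset.mem_singleton] at hi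
      rw [Finset.mem_range]; omega
    rw [hinter]
    rw [Finset.sum_insert (by simp), Finset.sum_singleton]
    omega
  have hreflect : ∑ i ∈ Finset.range (m+3), (2*m+2-i)
      = ∑ i ∈ Finset.range (m+3), (m+i) := by
    rw [← Finset.sum_range_reflect (fun i => m+i) (m+3)]
    apply Finset.sum_congr rfl
    intro i hi
    rw [Finset.mem_range] at hi
    omega
  have hlin : ∑ i ∈ Finset.range (m+3), (m+i)
      = (m+3)*m + ∑ i ∈ Finset.range (m+3), i := by
    rw [Finset.sum_add_distrib, Finset.sum_const, Finset.card_range, smul_eq_mul]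
  have g1 := Finset.sum_range_id_mul_two (m+3)
  have g2 := Finset.sum_range_id_mul_two (m+1)
  -- assemble
  set P1 := ∑ i ∈ Finset.range (m+3), (if i = 0 ∨ i = m+1 then 0 else (2*m+2-i)) with hP1
  set S1 := ∑ i ∈ Finset.range (m+3), i with hS1
  set S2 := ∑ i ∈ Finset.range (m+1), i with hS2
  have key : (m+3)*m + S1 = (2*m+2) + (m+1) + P1 := by
    rw [← hlin, ← hreflect, hfull, hpts]
  have g1' : S1 * 2 = (m+3)*(m+2) := by simpa using g1
  have g2' : S2 * 2 = (m+1)*m := by simpa using g2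
  nlinarith [key, g1', g2']

open Matrix

/-- The subspace of upper-triangular matrices commuting with a given matrix `M`. -/
noncomputable def commTriang (n : ℕ) (M : Matrix (Fin n) (Fin n) ℂ) :
    Submodule ℂ (Matrix (Fin n) (Fin n) ℂ) where
  carrier := {x | x.BlockTriangular id ∧ x * M = M * x}
  add_mem' := by
    rintro x y ⟨hx1, hx2⟩ ⟨hy1, hy2⟩
    refine ⟨fun i j h => ?_, by rw [add_mul, mul_add, hx2, hy2]⟩
    simp [Matrix.add_apply, hx1 h, hy1 h]
  zero_mem' := ⟨fun i j h => rfl, by simp⟩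
  smul_mem' := by
    rintro c x ⟨hx1, hx2⟩
    refine ⟨fun i j h => ?_, ?_⟩
    · simp [Matrix.smul_apply, hx1 h]
    · rw [smul_mul_assoc, hx2, mul_smul_comm]

set_option maxHeartbeats 2000000 in
/-- The set of upper-triangular matrices in `gl_{2l}` commuting with
`M_γ = E_{l+1,1} − E_{2l,l}` is a linear subspace of dimension `(2l−1)(l−2)+3`. -/
theorem dim_commTriang_Mgamma (l : ℕ) (hl : 2 ≤ l) :
    let M : Matrix (Fin (2 * l)) (Fin (2 * l)) ℂ :=
      single ⟨l, by omega⟩ ⟨0, by omega⟩ 1 -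
        single ⟨2 * l - 1, by omega⟩ ⟨l - 1, by omega⟩ 1
    Module.finrank ℂ (commTriang (2 * l) M) = (2 * l - 1) * (l - 2) + 3 := by
  intro M
  set a : Fin (2*l) := ⟨l, by omega⟩ with ha
  set b : Fin (2*l) := ⟨2*l-1, by omega⟩ with hb
  set c : Fin (2*l) := ⟨0, by omega⟩ with hc
  set d : Fin (2*l) := ⟨l-1, by omega⟩ with hd
  have hM : M = single a c 1 - single b d 1 := rfl
  have hab : a ≠ b := by simp [ha, hb, Fin.ext_iff]; omega
  have hac : a ≠ c := by simp [ha, hc, Fin.ext_iff]; omega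
  have had : a ≠ d := by simp [ha, hd, Fin.ext_iff]; omega
  have hbc : b ≠ c := by simp [hb, hc, Fin.ext_iff]; omega
  have hbd : b ≠ d := by simp [hb, hd, Fin.ext_iff]; omega
  have hcd : c ≠ d := by simp [hc, hd, Fin.ext_iff]; omega
  have h_le_b : ∀ j : Fin (2*l), j ≤ b := by
    intro j; have := j.isLt; simp [hb, Fin.le_def]; omega
  have h_a_lt_b : a < b := by simp [ha, hb, Fin.lt_def]; omega
  have h_c_lt_d : c < d := by simp [hc, hd, Fin.lt_def]; omega
  -- entrywise multiplication formulas
  have hxM : ∀ (x : Matrix (Fin (2*l)) (Fin (2*l)) ℂ) (i j : Fin (2*l)),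
      (x * M) i j = (if j = c then x i a else 0) - (if j = d then x i b else 0) := by
    intro x i j
    rw [hM, mul_sub, Matrix.sub_apply]
    congr 1
    · by_cases h : j = c
      · subst h; simp
      · simp [h]
    · by_cases h : j = d
      · subst h; simp
      · simp [h]
  have hMx : ∀ (x : Matrix (Fin (2*l)) (Fin (2*l)) ℂ) (i j : Fin (2*l)),
      (M * x) i j = (if i = a then x c j else 0) - (if i = b then x d j else 0) := by
    intro x i j
    rw [hM, sub_mul, Matrix.sub_apply]
    congr 1
    · by_cases h : i = a
      · subst h; simp
      · simp [h]
    · by_cases h : i = b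
      · subst h; simp
      · simp [h]
  -- the finset of free coordinates
  obtain ⟨S, hS⟩ : ∃ S : Finset (Fin (2*l) × Fin (2*l)), S =
    Finset.filter (fun p => p.1 ≤ p.2 ∧ p.1 ≠ c ∧ p.1 ≠ d ∧ p.2 ≠ a ∧ p.2 ≠ b) Finset.univ
      ∪ {(a,a),(a,b),(b,b)} := ⟨_, rfl⟩
  have hmemS : ∀ p : Fin (2*l) × Fin (2*l),
      p ∈ S ↔ (p.1 ≤ p.2 ∧ p.1 ≠ c ∧ p.1 ≠ d ∧ p.2 ≠ a ∧ p.2 ≠ b)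
        ∨ p = (a,a) ∨ p = (a,b) ∨ p = (b,b) := by
    intro p
    simp only [hS, Finset.mem_union, Finset.mem_filter, Finset.mem_insert,
      Finset.mem_singleton, Finset.mem_univ, true_and, ne_eq]
  have hS_le : ∀ p : Fin (2*l) × Fin (2*l), p ∈ S → p.1 ≤ p.2 := by
    intro p hp
    rw [hmemS] at hp
    rcases hp with ⟨h,-⟩|rfl|rfl|rfl
    exacts [h, le_refl a, le_of_lt h_a_lt_b, le_refl b]
  have hS_fst : ∀ p : Fin (2*l) × Fin (2*l), p ∈ S → p.1 ≠ c ∧ p.1 ≠ d := by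
    intro p hp
    rw [hmemS] at hp
    rcases hp with ⟨-,h2,h3,-⟩|rfl|rfl|rfl
    exacts [⟨h2,h3⟩, ⟨hac, had⟩, ⟨hac, had⟩, ⟨hbc, hbd⟩]
  have mem_aa : ((a,a) : Fin (2*l) × Fin (2*l)) ∈ S := (hmemS _).2 (Or.inr (Or.inl rfl))
  have mem_ab : ((a,b) : Fin (2*l) × Fin (2*l)) ∈ S := (hmemS _).2 (Or.inr (Or.inr (Or.inl rfl)))
  have mem_bb : ((b,b) : Fin (2*l) × Fin (2*l)) ∈ S := (hmemS _).2 (Or.inr (Or.inr (Or.inr rfl)))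
  -- injectivity
  have hinj : ∀ x ∈ commTriang (2*l) M, (∀ p ∈ S, x p.1 p.2 = 0) → x = 0 := by
    intro x hxW h0
    obtain ⟨hx1, hx2⟩ := hxW
    have hcomm : ∀ i j : Fin (2*l), (if j = c then x i a else 0) - (if j = d then x i b else 0)
        = (if i = a then x c j else 0) - (if i = b then x d j else 0) := by
      intro i j; rw [← hxM, ← hMx, hx2]
    have zaa : x a a = 0 := h0 (a,a) mem_aa
    have zab : x a b = 0 := h0 (a,b) mem_ab
    have zbb : x b b = 0 := h0 (b,b) mem_bb
    have zfree : ∀ i j : Fin (2*l), i ≤ j → i ≠ c → i ≠ d → j ≠ a → j ≠ b → x i j = 0 :=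
      fun i j h1 h2 h3 h4 h5 => h0 (i,j) ((hmemS _).2 (Or.inl ⟨h1,h2,h3,h4,h5⟩))
    have e1 : ∀ i, i ≠ a → i ≠ b → x i a = 0 := by
      intro i hia hib
      simpa [hcd, hia, hib] using hcomm i c
    have e2 : ∀ i, i ≠ a → i ≠ b → x i b = 0 := by
      intro i hia hib
      simpa [Ne.symm hcd, hia, hib] using hcomm i d
    have e3 : ∀ j, j ≠ c → j ≠ d → x c j = 0 := by
      intro j hjc hjd
      simpa [hjc, hjd, hab] using (hcomm a j).symm
    have e4 : ∀ j, j ≠ c → j ≠ d → x d j = 0 := by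
      intro j hjc hjd
      simpa [hjc, hjd, Ne.symm hab] using (hcomm b j).symm
    have eaa : x a a = x c c := by
      simpa [hcd, hab] using hcomm a c
    have eab : x c d = - x a b := by
      have h := hcomm a d
      rw [if_neg (Ne.symm hcd), if_pos rfl, if_pos rfl, if_neg hab] at h
      linear_combination -h
    have ebb : x b b = x d d := by
      have h := hcomm b d
      rw [if_neg (Ne.symm hcd), if_pos rfl, if_neg (Ne.symm hab), if_pos rfl] at h
      linear_combination -h
    ext i j
    show x i j = 0
    rcases lt_or_ge j i with hij | hij
    · exact hx1 hij
    · by_cases hic : i = c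
      · subst hic
        by_cases hjc : j = c
        · subst hjc; rw [← eaa]; exact zaa
        · by_cases hjd : j = d
          · subst hjd; rw [eab, zab, neg_zero]
          · exact e3 j hjc hjd
      · by_cases hid : i = d
        · subst hid
          by_cases hjd : j = d
          · subst hjd; rw [← ebb]; exact zbb
          · by_cases hjc : j = c
            · exfalso; subst hjc
              exact absurd hij (not_le.mpr h_c_lt_d)
            · exact e4 j hjc hjd
        · by_cases hja : j = a
          · subst hja
            by_cases hia : i = a
            · subst hia; exact zaa
            · refine e1 i hia ?_
              intro h; subst h
              exact absurd hij (not_le.mpr h_a_lt_b)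
          · by_cases hjb : j = b
            · subst hjb
              by_cases hia : i = a
              · subst hia; exact zab
              · by_cases hib : i = b
                · subst hib; exact zbb
                · exact e2 i hia hib
            · exact zfree i j hij hic hid hja hjb
  -- surjectivity
  have hsurj : ∀ f : S → ℂ, ∃ x, ∃ hx : x ∈ commTriang (2*l) M,
      ∀ p : S, x p.1.1 p.1.2 = f p := by
    intro f
    obtain ⟨g, hg⟩ : ∃ g : Fin (2*l) × Fin (2*l) → ℂ,
        g = fun p => if h : p ∈ S then f ⟨p, h⟩ else 0 := ⟨_, rfl⟩
    obtain ⟨x, hxdef⟩ : ∃ x : Matrix (Fin (2*l)) (Fin (2*l)) ℂ, x = Matrix.of fun i j =>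
      g (i,j) + (if (i,j) = ((c,c) : Fin (2*l) × Fin (2*l)) then g (a,a) else 0)
        + (if (i,j) = ((c,d) : Fin (2*l) × Fin (2*l)) then - g (a,b) else 0)
        + (if (i,j) = ((d,d) : Fin (2*l) × Fin (2*l)) then g (b,b) else 0) := ⟨_, rfl⟩
    have hx_apply : ∀ i j : Fin (2*l), x i j =
        g (i,j) + (if (i,j) = ((c,c) : Fin (2*l) × Fin (2*l)) then g (a,a) else 0)
        + (if (i,j) = ((c,d) : Fin (2*l) × Fin (2*l)) then - g (a,b) else 0)
        + (if (i,j) = ((d,d) : Fin (2*l) × Fin (2*l)) then g (b,b) else 0) := fun i j => by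
      rw [hxdef]; rfl
    have gnot : ∀ p ∉ S, g p = 0 := fun p hp => by rw [hg]; exact dif_neg hp
    have F1 : ∀ i, i ≠ a → i ≠ b → x i a = 0 := by
      intro i hia hib
      have h1 : (i, a) ∉ S := by
        rw [hmemS]
        rintro (⟨-,-,-,h4,-⟩ | h | h | h)
        · exact h4 rfl
        · exact hia (congrArg Prod.fst h)
        · exact hia (congrArg Prod.fst h)
        · exact hib (congrArg Prod.fst h)
      rw [hx_apply, gnot _ h1, if_neg (fun h => hac (congrArg Prod.snd h)),
        if_neg (fun h => had (congrArg Prod.snd h)),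
        if_neg (fun h => had (congrArg Prod.snd h))]
      ring
    have F2 : ∀ i, i ≠ a → i ≠ b → x i b = 0 := by
      intro i hia hib
      have h1 : (i, b) ∉ S := by
        rw [hmemS]
        rintro (⟨-,-,-,-,h5⟩ | h | h | h)
        · exact h5 rfl
        · exact hia (congrArg Prod.fst h)
        · exact hia (congrArg Prod.fst h)
        · exact hib (congrArg Prod.fst h)
      rw [hx_apply, gnot _ h1, if_neg (fun h => hbc (congrArg Prod.snd h)),
        if_neg (fun h => hbd (congrArg Prod.snd h)),
        if_neg (fun h => hbd (congrArg Prod.snd h))]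
      ring
    have F3 : ∀ j, j ≠ c → j ≠ d → x c j = 0 := by
      intro j hjc hjd
      have h1 : (c, j) ∉ S := by
        rw [hmemS]
        rintro (⟨-,h2,-,-⟩ | h | h | h)
        · exact h2 rfl
        · exact hac (congrArg Prod.fst h).symm
        · exact hac (congrArg Prod.fst h).symm
        · exact hbc (congrArg Prod.fst h).symm
      rw [hx_apply, gnot _ h1, if_neg (fun h => hjc (congrArg Prod.snd h)),
        if_neg (fun h => hjd (congrArg Prod.snd h)),
        if_neg (fun h => hcd (congrArg Prod.fst h))]
      ring
    have F4 : ∀ j, j ≠ c → j ≠ d → x d j = 0 := by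
      intro j hjc hjd
      have h1 : (d, j) ∉ S := by
        rw [hmemS]
        rintro (⟨-,-,h3,-⟩ | h | h | h)
        · exact h3 rfl
        · exact had (congrArg Prod.fst h).symm
        · exact had (congrArg Prod.fst h).symm
        · exact hbd (congrArg Prod.fst h).symm
      rw [hx_apply, gnot _ h1, if_neg (fun h => hcd (congrArg Prod.fst h).symm),
        if_neg (fun h => hcd (congrArg Prod.fst h).symm),
        if_neg (fun h => hjd (congrArg Prod.snd h))]
      ring
    have Ftri : ∀ i j : Fin (2*l), j < i → x i j = 0 := by
      intro i j hij
      have h1 : (i,j) ∉ S := fun h => absurd (hS_le _ h) (not_le.mpr hij)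
      have n1 : ¬((i,j) = ((c,c) : Fin (2*l) × Fin (2*l))) := by
        intro h
        have u1 : i = c := congrArg Prod.fst h
        have u2 : j = c := congrArg Prod.snd h
        rw [u1, u2] at hij
        exact lt_irrefl _ hij
      have n2 : ¬((i,j) = ((c,d) : Fin (2*l) × Fin (2*l))) := by
        intro h
        have u1 : i = c := congrArg Prod.fst h
        have u2 : j = d := congrArg Prod.snd h
        rw [u1, u2] at hij
        exact lt_asymm h_c_lt_d hij
      have n3 : ¬((i,j) = ((d,d) : Fin (2*l) × Fin (2*l))) := by
        intro h
        have u1 : i = d := congrArg Prod.fst h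
        have u2 : j = d := congrArg Prod.snd h
        rw [u1, u2] at hij
        exact lt_irrefl _ hij
      rw [hx_apply, gnot _ h1, if_neg n1, if_neg n2, if_neg n3]
      ring
    -- diagonal relations
    have Fcc : x c c = g (a,a) := by
      have h1 : ((c,c) : Fin (2*l) × Fin (2*l)) ∉ S := by
        rw [hmemS]
        rintro (⟨-,h2,-,-⟩ | h | h | h)
        · exact h2 rfl
        · exact hac (congrArg Prod.fst h).symm
        · exact hac (congrArg Prod.fst h).symm
        · exact hbc (congrArg Prod.fst h).symm
      rw [hx_apply, gnot _ h1, if_pos rfl, if_neg (fun h => hcd (congrArg Prod.snd h)),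
        if_neg (fun h => hcd (congrArg Prod.fst h))]
      ring
    have Faa : x a a = g (a,a) := by
      rw [hx_apply, if_neg (fun h => hac (congrArg Prod.fst h)),
        if_neg (fun h => hac (congrArg Prod.fst h)),
        if_neg (fun h => had (congrArg Prod.fst h))]
      ring
    have Fcd : x c d = - g (a,b) := by
      have h1 : ((c,d) : Fin (2*l) × Fin (2*l)) ∉ S := by
        rw [hmemS]
        rintro (⟨-,h2,-,-⟩ | h | h | h)
        · exact h2 rfl
        · exact hac (congrArg Prod.fst h).symm
        · exact hac (congrArg Prod.fst h).symm
        · exact hbc (congrArg Prod.fst h).symm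
      rw [hx_apply, gnot _ h1, if_neg (fun h => hcd (congrArg Prod.snd h).symm),
        if_pos rfl, if_neg (fun h => hcd (congrArg Prod.fst h))]
      ring
    have Fab : x a b = g (a,b) := by
      rw [hx_apply, if_neg (fun h => hac (congrArg Prod.fst h)),
        if_neg (fun h => hac (congrArg Prod.fst h)),
        if_neg (fun h => had (congrArg Prod.fst h))]
      ring
    have Fdd : x d d = g (b,b) := by
      have h1 : ((d,d) : Fin (2*l) × Fin (2*l)) ∉ S := by
        rw [hmemS]
        rintro (⟨-,-,h3,-⟩ | h | h | h)
        · exact h3 rfl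
        · exact had (congrArg Prod.fst h).symm
        · exact had (congrArg Prod.fst h).symm
        · exact hbd (congrArg Prod.fst h).symm
      rw [hx_apply, gnot _ h1, if_neg (fun h => hcd (congrArg Prod.fst h).symm),
        if_neg (fun h => hcd (congrArg Prod.fst h).symm), if_pos rfl]
      ring
    have Fbb : x b b = g (b,b) := by
      rw [hx_apply, if_neg (fun h => hbc (congrArg Prod.fst h)),
        if_neg (fun h => hbc (congrArg Prod.fst h)),
        if_neg (fun h => hbd (congrArg Prod.fst h))]
      ring
    have Ecc : x c c = x a a := by rw [Fcc, Faa]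
    have Ecd : x c d = - x a b := by rw [Fcd, Fab]
    have Edd : x d d = x b b := by rw [Fdd, Fbb]
    have hcomm : x * M = M * x := by
      ext i j
      rw [hxM, hMx]
      by_cases hjc : j = c
      · subst hjc
        rw [if_pos rfl, if_neg hcd]
        by_cases hia : i = a
        · subst hia
          rw [if_pos rfl, if_neg hab, sub_zero, sub_zero, Ecc]
        · by_cases hib : i = b
          · subst hib
            rw [if_neg (Ne.symm hab), if_pos rfl,
              Ftri b a h_a_lt_b, Ftri d c h_c_lt_d]
            try ring
          · rw [if_neg hia, if_neg hib, F1 i hia hib]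
            try ring
      · by_cases hjd : j = d
        · subst hjd
          rw [if_neg (Ne.symm hcd), if_pos rfl]
          by_cases hia : i = a
          · subst hia
            rw [if_pos rfl, if_neg hab, Ecd]
            try ring
          · by_cases hib : i = b
            · subst hib
              rw [if_neg (Ne.symm hab), if_pos rfl, Edd]
            · rw [if_neg hia, if_neg hib, F2 i hia hib]
              try ring
        · rw [if_neg hjc, if_neg hjd]
          by_cases hia : i = a
          · subst hia
            rw [if_pos rfl, if_neg hab, F3 j hjc hjd]
            try ring
          · by_cases hib : i = b
            · subst hib
              rw [if_neg (Ne.symm hab), if_pos rfl, F4 j hjc hjd]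
              try ring
            · rw [if_neg hia, if_neg hib]
              try ring
    refine ⟨x, ⟨fun i j h => Ftri i j h, hcomm⟩, ?_⟩
    rintro ⟨⟨i, j⟩, hp⟩
    have h1 := hS_fst _ hp
    show x i j = f _
    rw [hx_apply, if_neg (fun h => h1.1 (congrArg Prod.fst h)),
      if_neg (fun h => h1.1 (congrArg Prod.fst h)),
      if_neg (fun h => h1.2 (congrArg Prod.fst h))]
    simp only [add_zero]
    rw [hg]
    exact dif_pos hp
  -- cardinality
  have hdisj : Disjoint
      (Finset.filter (fun p : Fin (2*l) × Fin (2*l) =>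
        p.1 ≤ p.2 ∧ p.1 ≠ c ∧ p.1 ≠ d ∧ p.2 ≠ a ∧ p.2 ≠ b) Finset.univ)
      ({(a,a),(a,b),(b,b)} : Finset (Fin (2*l) × Fin (2*l))) := by
    rw [Finset.disjoint_left]
    intro p hp hq
    rw [Finset.mem_filter] at hp
    simp only [Finset.mem_insert, Finset.mem_singleton] at hq
    rcases hq with rfl|rfl|rfl
    · exact hp.2.2.2.2.1 rfl
    · exact hp.2.2.2.2.2 rfl
    · exact hp.2.2.2.2.2 rfl
  have hpts : ({(a,a),(a,b),(b,b)} : Finset (Fin (2*l) × Fin (2*l))).card = 3 := by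
    rw [Finset.card_insert_of_notMem (by simp [Prod.ext_iff, hab]),
      Finset.card_insert_of_notMem (by simp [Prod.ext_iff, hab]),
      Finset.card_singleton]
  have hfilter : (Finset.filter (fun p : Fin (2*l) × Fin (2*l) =>
      p.1 ≤ p.2 ∧ p.1 ≠ c ∧ p.1 ≠ d ∧ p.2 ≠ a ∧ p.2 ≠ b) Finset.univ).card
      = (2*l-1)*(l-2) := by
    rw [Finset.card_filter, Fintype.sum_prod_type]
    have inner : ∀ i : Fin (2*l),
        (∑ j : Fin (2*l), if (i ≤ j ∧ i ≠ c ∧ i ≠ d ∧ j ≠ a ∧ j ≠ b) then (1:ℕ) else 0)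
        = if (i:ℕ) = 0 ∨ (i:ℕ) = l-1 then 0
          else ((2*l-1-(i:ℕ)) - if (i:ℕ) ≤ l then 1 else 0) := by
      intro i
      by_cases h0 : (i:ℕ) = 0 ∨ (i:ℕ) = l-1
      · rw [if_pos h0]
        have hcd' : i = c ∨ i = d := by
          rcases h0 with h|h
          · exact Or.inl (Fin.ext (by rw [hc]; exact h))
          · exact Or.inr (Fin.ext (by rw [hd]; exact h))
        refine Finset.sum_eq_zero fun j _ => ?_
        rw [if_neg]
        rintro ⟨-, h2, h3, -⟩
        rcases hcd' with h|h
        exacts [h2 h, h3 h]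
      · rw [if_neg h0]
        push_neg at h0
        have hic : i ≠ c := fun h => h0.1 (by rw [h, hc])
        have hid : i ≠ d := fun h => h0.2 (by rw [h, hd])
        have hiff : ∀ j : Fin (2*l),
            (i ≤ j ∧ i ≠ c ∧ i ≠ d ∧ j ≠ a ∧ j ≠ b) ↔ (i ≤ j ∧ j ≠ a ∧ j ≠ b) :=
          fun j => ⟨fun ⟨u,_,_,v,w⟩ => ⟨u,v,w⟩, fun ⟨u,v,w⟩ => ⟨u,hic,hid,v,w⟩⟩
        rw [Finset.sum_congr rfl (fun j _ => if_congr (hiff j) rfl rfl), ← Finset.card_filter]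
        have hsplitf : Finset.filter (fun j : Fin (2*l) => i ≤ j ∧ j ≠ a ∧ j ≠ b) Finset.univ
            = ((Finset.Ici i).erase a).erase b := by
          ext j
          simp only [Finset.mem_filter, Finset.mem_erase, Finset.mem_Ici, Finset.mem_univ,
            true_and]
          tauto
        rw [hsplitf]
        have hiLt := i.isLt
        by_cases hil : (i:ℕ) ≤ l
        · rw [if_pos hil]
          have ha_mem : a ∈ Finset.Ici i := by
            rw [Finset.mem_Ici]
            exact hil
          have hb_mem : b ∈ (Finset.Ici i).erase a := by
            rw [Finset.mem_erase, Finset.mem_Ici]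
            exact ⟨Ne.symm hab, h_le_b i⟩
          rw [Finset.card_erase_of_mem hb_mem, Finset.card_erase_of_mem ha_mem, Fin.card_Ici]
          omega
        · rw [if_neg hil]
          have ha_not : a ∉ Finset.Ici i := by
            rw [Finset.mem_Ici]
            intro h
            exact hil h
          have hb_mem : b ∈ Finset.Ici i := by
            rw [Finset.mem_Ici]
            exact h_le_b i
          rw [Finset.erase_eq_of_notMem ha_not, Finset.card_erase_of_mem hb_mem, Fin.card_Ici]
          omega
    rw [Finset.sum_congr rfl (fun i _ => inner i)]
    rw [Fin.sum_univ_eq_sum_range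
      (fun iv => if iv = 0 ∨ iv = l-1 then 0 else ((2*l-1-iv) - if iv ≤ l then 1 else 0)) (2*l)]
    obtain ⟨m, rfl⟩ : ∃ m, l = m + 2 := ⟨l - 2, by omega⟩
    calc ∑ i ∈ Finset.range (2*(m+2)),
          (if i = 0 ∨ i = (m+2)-1 then 0 else ((2*(m+2)-1-i) - if i ≤ m+2 then 1 else 0))
        = ∑ i ∈ Finset.range (2*m+4),
          (if i = 0 ∨ i = m+1 then 0 else ((2*m+3-i) - if i ≤ m+2 then 1 else 0)) :=
          Finset.sum_congr (congrArg Finset.range (by ring)) (fun i _ => by split_ifs <;> omega)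
      _ = (2*m+3)*m := count_nat m
      _ = (2*(m+2)-1)*((m+2)-2) := by congr 1 <;> omega
  have hcard : S.card = (2*l-1)*(l-2)+3 := by
    rw [hS, Finset.card_union_of_disjoint hdisj, hpts, hfilter]
  rw [finrank_submodule_eq_card _ S hinj hsurj, hcard]
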